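/- arXiv:1605.09107 — 3 statements merged into one kernel-verified Lean document; each statement's English description precedes it below -/
import Mathlib

section
/- Let β : ℕ → ℝ satisfy |β_u - Ξ| ≤ Δ for all u, where Ξ ∈ ℝ and 0 ≤ Δ ≤ π/2. Define g_t = exp(i ∑_{u=1}^t β_u). Then for every integer τ ≥ 0 with τΔ < π/2 and every N > τ, |(1/N) ∑_{t=0}^{N-1-τ} conj(g_t) g_{t+τ}| ≥ (1 - τ/N) cos(τΔ). -/
/-!
`conj (g t) * g (t + τ) = exp (i S_t)` with `S_t = β_{t+1} + ⋯ + β_{t+τ}`, and `|S_t - τ Ξ| ≤ τ Δ`.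
After rotating the sum by `exp (-i τ Ξ)`, every summand has real part `cos (S_t - τ Ξ) ≥ cos (τ Δ)`,
so the norm of the sum is at least `(N - τ) cos (τ Δ)`.
-/

open Complex Real Finset

open scoped ComplexConjugate

theorem conj_exp_ofReal_mul_I_mul_exp_ofReal_mul_I (a b : ℝ) :
    conj (exp (a * I)) * exp (b * I) = exp ((b - a : ℝ) * I) := by
  rw [← exp_conj, ← Complex.exp_add, map_mul, conj_ofReal, conj_I]
  push_cast
  ring_nf

theorem sum_Icc_one_add_sub_sum_Icc_one {M : Type*} [AddCommGroup M] (f : ℕ → M) (t τ : ℕ) :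
    ∑ u ∈ Icc 1 (t + τ), f u - ∑ u ∈ Icc 1 t, f u = ∑ u ∈ Ioc t (t + τ), f u := by
  rw [← zero_add 1, Icc_add_one_left_eq_Ioc, Icc_add_one_left_eq_Ioc, sub_eq_iff_eq_add',
    sum_Ioc_consecutive f t.zero_le (t.le_add_right τ)]

theorem abs_sum_sub_card_mul_le {ι : Type*} (s : Finset ι) (f : ι → ℝ) {c δ : ℝ}
    (h : ∀ i ∈ s, |f i - c| ≤ δ) : |∑ i ∈ s, f i - #s * c| ≤ #s * δ :=
  calc |∑ i ∈ s, f i - #s * c| = |∑ i ∈ s, (f i - c)| := by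
        rw [sum_sub_distrib, sum_const, nsmul_eq_mul]
    _ ≤ ∑ i ∈ s, |f i - c| := abs_sum_le_sum_abs _ _
    _ ≤ #s * δ := by simpa using sum_le_card_nsmul s _ δ h

/-- Rotating by `exp (-c I)` puts every summand within angle `δ` of the positive real axis. -/
theorem card_mul_cos_le_norm_sum_exp_ofReal_mul_I {ι : Type*} (s : Finset ι) (θ : ι → ℝ)
    {c δ : ℝ} (hδ : δ ≤ π) (hθ : ∀ i ∈ s, |θ i - c| ≤ δ) :
    #s * Real.cos δ ≤ ‖∑ i ∈ s, exp (θ i * I)‖ := by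
  have hcos : ∀ i ∈ s, Real.cos δ ≤ Real.cos (θ i - c) := fun i hi => by
    rw [← Real.cos_abs (θ i - c)]
    exact cos_le_cos_of_nonneg_of_le_pi (abs_nonneg _) hδ (hθ i hi)
  calc #s * Real.cos δ ≤ ∑ i ∈ s, Real.cos (θ i - c) := by
        simpa using card_nsmul_le_sum s _ _ hcos
    _ = (exp ((-c : ℝ) * I) * ∑ i ∈ s, exp (θ i * I)).re := by
        rw [mul_sum, re_sum]
        refine sum_congr rfl fun i _ => ?_
        rw [← Complex.exp_add, ← exp_ofReal_mul_I_re]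
        push_cast
        ring_nf
    _ ≤ ‖exp ((-c : ℝ) * I) * ∑ i ∈ s, exp (θ i * I)‖ := re_le_norm _
    _ = ‖∑ i ∈ s, exp (θ i * I)‖ := by rw [norm_mul, norm_exp_ofReal_mul_I, one_mul]

theorem stmt_6_general (β : ℕ → ℝ) (Ξ Δ : ℝ)
    (hβ : ∀ u, |β u - Ξ| ≤ Δ)
    (g : ℕ → ℂ) (hg : ∀ t, g t = Complex.exp (Complex.I * ∑ u ∈ Finset.Icc 1 t, β u))
    (τ : ℕ) (hτ : (τ : ℝ) * Δ < Real.pi / 2) (N : ℕ) (hN : τ < N) :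
    ‖(1 / (N : ℂ)) * ∑ t ∈ Finset.range (N - τ),
        (starRingEnd ℂ) (g t) * g (t + τ)‖
      ≥ (1 - (τ : ℝ) / N) * Real.cos ((τ : ℝ) * Δ) := by
  have hterm : ∀ t, conj (g t) * g (t + τ) = exp ((∑ u ∈ Ioc t (t + τ), β u : ℝ) * I) := by
    intro t
    simp only [hg, mul_comm I, conj_exp_ofReal_mul_I_mul_exp_ofReal_mul_I,
      sum_Icc_one_add_sub_sum_Icc_one]
  have hdev : ∀ t, |∑ u ∈ Ioc t (t + τ), β u - τ * Ξ| ≤ τ * Δ := fun t => by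
    simpa using abs_sum_sub_card_mul_le (Ioc t (t + τ)) β fun u _ => hβ u
  have hsum := card_mul_cos_le_norm_sum_exp_ofReal_mul_I (range (N - τ)) _
    (by linarith [pi_pos]) fun t _ => hdev t
  simp_rw [← hterm, card_range, Nat.cast_sub hN.le] at hsum
  have hN0 : (0 : ℝ) < N := by exact_mod_cast τ.zero_le.trans_lt hN
  rw [norm_mul, norm_div, norm_one, Complex.norm_natCast, ge_iff_le]
  calc (1 - (τ : ℝ) / N) * Real.cos (τ * Δ) = 1 / N * ((N - τ) * Real.cos (τ * Δ)) := by
        field_simp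
    _ ≤ _ := by gcongr

theorem stmt_6 (β : ℕ → ℝ) (Ξ Δ : ℝ) (hΔ0 : 0 ≤ Δ) (hΔπ : Δ ≤ Real.pi / 2)
    (hβ : ∀ u, |β u - Ξ| ≤ Δ)
    (g : ℕ → ℂ) (hg : ∀ t, g t = Complex.exp (Complex.I * ∑ u ∈ Finset.Icc 1 t, β u))
    (τ : ℕ) (hτ : (τ : ℝ) * Δ < Real.pi / 2) (N : ℕ) (hN : τ < N) :
    ‖(1 / (N : ℂ)) * ∑ t ∈ Finset.range (N - τ),
        (starRingEnd ℂ) (g t) * g (t + τ)‖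
      ≥ (1 - (τ : ℝ) / N) * Real.cos ((τ : ℝ) * Δ) :=
  stmt_6_general β Ξ Δ hβ g hg τ hτ N hN
end

section
/- Let N ≥ 2, γ ∈ ℝ, Δ ∈ (0, π), and define β_t = γ + Δ(2t - (N-1))/(2(N-1)) for t = 0,...,N-1, and g_t = exp(i ∑_{u=1}^t β_u). Then for every integer τ with 1 ≤ τ ≤ N-1 such that sin(Δτ/(2(N-1))) ≠ 0, (1/N) ∑_{t=0}^{N-1-τ} conj(g_t) g_{t+τ} = [sin(Δτ(N-τ)/(2(N-1))) / (N sin(Δτ/(2(N-1))))] · exp(i(γτ + Δτ/(2(N-1)))). -/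
/-!
The frequencies `β u` are affine in `u`, so the phase `∑_{u ≤ t} β u` of `g t` is quadratic in `t`
and the phase of `conj (g t) * g (t + τ)` is affine in `t`, with slope `Δτ/(N-1)`. The
autocorrelation is therefore a geometric sum of `exp (2iθt)` with `θ = Δτ/(2(N-1))`, which the
Dirichlet-kernel identity evaluates to `sin (Mθ) / sin θ · exp (iθ(M-1))`, `M = N - τ`.
-/

open Complex Real Finset

theorem Complex.exp_two_mul_I_mul_sub_one (z : ℂ) :
    exp (2 * I * z) - 1 = 2 * I * sin z * exp (I * z) := by
  have hinv : exp (-(I * z)) * exp (I * z) = 1 := by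
    rw [← Complex.exp_add, neg_add_cancel, exp_zero]
  rw [Complex.sin, show 2 * I * z = I * z + I * z by ring, Complex.exp_add,
    show -z * I = -(I * z) by ring, mul_comm z I]
  linear_combination (exp (I * z) * exp (I * z) - exp (-(I * z)) * exp (I * z)) * I_sq + hinv

theorem Complex.sum_range_exp_two_mul_I_mul (z : ℂ) (hz : sin z ≠ 0) (M : ℕ) :
    ∑ t ∈ range M, exp (2 * I * z * t) = sin (M * z) / sin z * exp (I * z * (M - 1)) := by
  have hden : exp (2 * I * z) - 1 ≠ 0 := by
    rw [exp_two_mul_I_mul_sub_one]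
    simp [hz, I_ne_zero, exp_ne_zero]
  calc ∑ t ∈ range M, exp (2 * I * z * t)
      = ∑ t ∈ range M, exp (2 * I * z) ^ t := by
        refine sum_congr rfl fun t _ => ?_
        rw [← exp_nat_mul, mul_comm]
    _ = (exp (2 * I * (M * z)) - 1) / (exp (2 * I * z) - 1) := by
        rw [geom_sum_eq (sub_ne_zero.mp hden), ← exp_nat_mul]
        ring_nf
    _ = sin (M * z) / sin z * exp (I * z * (M - 1)) := by
        rw [exp_two_mul_I_mul_sub_one, exp_two_mul_I_mul_sub_one,
          show I * (M * z) = I * z * (M - 1) + I * z by ring, Complex.exp_add]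
        field_simp [exp_ne_zero (I * z), I_ne_zero]

theorem Complex.conj_exp_ofReal_mul_I_mul_exp (x y : ℝ) :
    starRingEnd ℂ (exp (I * x)) * exp (I * y) = exp (I * ↑(y - x)) := by
  rw [← exp_conj, ← Complex.exp_add, map_mul, conj_I, conj_ofReal]
  push_cast
  ring_nf

theorem sum_Icc_one_affine (a b : ℝ) (t : ℕ) :
    ∑ u ∈ Icc 1 t, (a + b * u) = a * t + b * t * (t + 1) / 2 := by
  induction t with
  | zero => simp
  | succ t ih =>
    rw [sum_Icc_succ_top (by omega), ih]
    push_cast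
    ring

theorem sum_conj_mul_shift_of_affine_frequency (a b : ℝ) (β : ℕ → ℝ)
    (hβ : ∀ u, β u = a + b * u) (g : ℕ → ℂ)
    (hg : ∀ t, g t = exp (I * ∑ u ∈ Icc 1 t, β u)) (M τ : ℕ)
    (hsin : Real.sin (b * τ / 2) ≠ 0) :
    ∑ t ∈ range M, starRingEnd ℂ (g t) * g (t + τ)
      = ((Real.sin (M * (b * τ / 2)) / Real.sin (b * τ / 2) : ℝ) : ℂ)
        * exp (I * (a * τ + b * τ * (τ + M) / 2)) := by
  set θ : ℝ := b * τ / 2 with hθ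
  have hterm : ∀ t : ℕ, starRingEnd ℂ (g t) * g (t + τ)
      = exp (I * (a * τ + θ * (τ + 1))) * exp (2 * I * θ * t) := by
    intro t
    rw [hg, hg, conj_exp_ofReal_mul_I_mul_exp, ← Complex.exp_add]
    simp only [hβ, sum_Icc_one_affine, hθ]
    push_cast
    ring_nf
  rw [sum_congr rfl fun t _ => hterm t, ← mul_sum,
    sum_range_exp_two_mul_I_mul _ (by exact_mod_cast hsin), mul_left_comm, ← Complex.exp_add, hθ]
  push_cast
  ring_nf

theorem stmt_8_general (N : ℕ) (hN : 2 ≤ N) (γ Δ : ℝ)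
    (β : ℕ → ℝ)
    (hβ : ∀ t, β t = γ + Δ * (2 * (t : ℝ) - ((N : ℝ) - 1)) / (2 * ((N : ℝ) - 1)))
    (g : ℕ → ℂ) (hg : ∀ t, g t = Complex.exp (Complex.I * ∑ u ∈ Finset.Icc 1 t, β u))
    (τ : ℕ) (hτN : τ ≤ N - 1)
    (hsin : Real.sin (Δ * τ / (2 * ((N : ℝ) - 1))) ≠ 0) :
    (1 / (N : ℂ)) * ∑ t ∈ Finset.range (N - τ), (starRingEnd ℂ) (g t) * g (t + τ)
      = ((Real.sin (Δ * τ * ((N : ℝ) - τ) / (2 * ((N : ℝ) - 1)))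
          / ((N : ℝ) * Real.sin (Δ * τ / (2 * ((N : ℝ) - 1))))) : ℂ)
        * Complex.exp (Complex.I * (γ * τ + Δ * τ / (2 * ((N : ℝ) - 1)))) := by
  have hN1 : (N : ℝ) - 1 ≠ 0 := by
    have : (2 : ℝ) ≤ N := by exact_mod_cast hN
    linarith
  have hβ_affine : ∀ u, β u = (γ - Δ / 2) + Δ / ((N : ℝ) - 1) * u := by
    intro u
    rw [hβ]
    field_simp
    ring
  have hθ : Δ / ((N : ℝ) - 1) * τ / 2 = Δ * τ / (2 * ((N : ℝ) - 1)) := by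
    field_simp
  have hphase : ((γ - Δ / 2 : ℝ) : ℂ) * τ + (Δ / ((N : ℝ) - 1) : ℝ) * τ * (τ + (N - τ : ℕ)) / 2
      = γ * τ + Δ * τ / (2 * ((N : ℝ) - 1)) := by
    push_cast [Nat.cast_sub (show τ ≤ N by omega)]
    field_simp [show ((N : ℂ) - 1) ≠ 0 by exact_mod_cast hN1]
    ring
  rw [sum_conj_mul_shift_of_affine_frequency _ _ β hβ_affine g hg (N - τ) τ (hθ ▸ hsin), hθ,
    hphase, Nat.cast_sub (show τ ≤ N by omega)]
  push_cast
  ring_nf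

theorem stmt_8 (N : ℕ) (hN : 2 ≤ N) (γ Δ : ℝ) (hΔ : Δ ∈ Set.Ioo 0 Real.pi)
    (β : ℕ → ℝ)
    (hβ : ∀ t, β t = γ + Δ * (2 * (t : ℝ) - ((N : ℝ) - 1)) / (2 * ((N : ℝ) - 1)))
    (g : ℕ → ℂ) (hg : ∀ t, g t = Complex.exp (Complex.I * ∑ u ∈ Finset.Icc 1 t, β u))
    (τ : ℕ) (hτ1 : 1 ≤ τ) (hτN : τ ≤ N - 1)
    (hsin : Real.sin (Δ * τ / (2 * ((N : ℝ) - 1))) ≠ 0) :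
    (1 / (N : ℂ)) * ∑ t ∈ Finset.range (N - τ), (starRingEnd ℂ) (g t) * g (t + τ)
      = ((Real.sin (Δ * τ * ((N : ℝ) - τ) / (2 * ((N : ℝ) - 1)))
          / ((N : ℝ) * Real.sin (Δ * τ / (2 * ((N : ℝ) - 1))))) : ℂ)
        * Complex.exp (Complex.I * (γ * τ + Δ * τ / (2 * ((N : ℝ) - 1)))) :=
  stmt_8_general N hN γ Δ β hβ g hg τ hτN hsin
end

section
/- Let μ ≥ 1 be an integer, γ ∈ ℝ, a > 0, and suppose φ : ℕ → ℝ satisfies φ_t = φ_{t mod μ} + γ ⌊t/μ⌋ (mod 2π). Let c_Z : ℤ → ℂ be a sequence with c_Z(τ) = 0 whenever μ does not divide τ. Then the function (t, τ) ↦ a² e^{i(φ_{t+τ} - φ_t)} c_Z(τ) does not depend on t: it equals a² e^{iγτ/μ} c_Z(τ) for all t ≥ 0 and τ ≥ 0 with μ | τ or c_Z(τ)=0. -/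
open Complex Real

/-! Shifting `t` by a multiple `μ * m` of the period leaves `t % μ` unchanged and raises
`⌊t / μ⌋` by `m`, so the phase increment `φ (t + μ m) - φ t` is `γ m` modulo `2π`.
Hence `e^{i(φ_{t+τ} - φ_t)} = e^{iγτ/μ}` whenever `μ ∣ τ`, and for the remaining `τ` both
sides vanish because `c_Z τ = 0`. -/

theorem exists_phase_add_mul_sub_eq {μ : ℕ} (hμ : 0 < μ) {γ : ℝ} {φ : ℕ → ℝ}
    (hφ : ∀ t : ℕ, ∃ k : ℤ, φ t = φ (t % μ) + γ * (t / μ : ℕ) + 2 * π * k) (t m : ℕ) :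
    ∃ k : ℤ, φ (t + μ * m) - φ t = γ * m + 2 * π * k := by
  obtain ⟨k₁, h₁⟩ := hφ (t + μ * m)
  obtain ⟨k₂, h₂⟩ := hφ t
  refine ⟨k₁ - k₂, ?_⟩
  rw [h₁, h₂, Nat.add_mul_mod_self_left, Nat.add_mul_div_left _ _ hμ]
  push_cast
  ring

theorem cexp_I_mul_phase_add_mul_sub {μ : ℕ} (hμ : 0 < μ) {γ : ℝ} {φ : ℕ → ℝ}
    (hφ : ∀ t : ℕ, ∃ k : ℤ, φ t = φ (t % μ) + γ * (t / μ : ℕ) + 2 * π * k) (t m : ℕ) :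
    cexp (I * (φ (t + μ * m) - φ t)) = cexp (I * (γ * (μ * m : ℕ) / μ)) := by
  obtain ⟨k, hk⟩ := exists_phase_add_mul_sub_eq hμ hφ t m
  have hμ' : (μ : ℂ) ≠ 0 := Nat.cast_ne_zero.mpr hμ.ne'
  refine exp_eq_exp_iff_exists_int.mpr ⟨k, ?_⟩
  rw [← ofReal_sub, hk]
  push_cast
  field_simp

theorem stmt_16_general (μ : ℕ) (hμ : 1 ≤ μ) (γ a : ℝ)
    (φ : ℕ → ℝ)
    (hφ : ∀ t : ℕ, ∃ k : ℤ, φ t = φ (t % μ) + γ * (t / μ : ℕ) + 2 * Real.pi * k)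
    (cZ : ℤ → ℂ) (hcZ : ∀ τ : ℤ, ¬ ((μ : ℤ) ∣ τ) → cZ τ = 0) :
    ∀ t τ : ℕ,
      ((a : ℂ) ^ 2) * Complex.exp (Complex.I * (φ (t + τ) - φ t)) * cZ (τ : ℤ)
        = ((a : ℂ) ^ 2) * Complex.exp (Complex.I * (γ * τ / μ)) * cZ (τ : ℤ) := by
  intro t τ
  by_cases hdvd : (μ : ℤ) ∣ (τ : ℤ)
  · obtain ⟨m, rfl⟩ := Int.natCast_dvd_natCast.mp hdvd
    rw [cexp_I_mul_phase_add_mul_sub hμ hφ t m]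
  · rw [hcZ _ hdvd, mul_zero, mul_zero]

theorem stmt_16 (μ : ℕ) (hμ : 1 ≤ μ) (γ a : ℝ) (ha : 0 < a)
    (φ : ℕ → ℝ)
    (hφ : ∀ t : ℕ, ∃ k : ℤ, φ t = φ (t % μ) + γ * (t / μ : ℕ) + 2 * Real.pi * k)
    (cZ : ℤ → ℂ) (hcZ : ∀ τ : ℤ, ¬ ((μ : ℤ) ∣ τ) → cZ τ = 0) :
    ∀ t τ : ℕ,
      ((a : ℂ) ^ 2) * Complex.exp (Complex.I * (φ (t + τ) - φ t)) * cZ (τ : ℤ)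
        = ((a : ℂ) ^ 2) * Complex.exp (Complex.I * (γ * τ / μ)) * cZ (τ : ℤ) :=
  stmt_16_general μ hμ γ a φ hφ cZ hcZ
end
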